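/- (Corollary: many dimensions.) Fix 0 < ν_R < ν_P, and for each positive integer k define f_k(ν) := (1/V_{1,k})·(2πν)^{−k/2}·∫_{B_k} exp(−‖x‖²/(2ν)) dx, where B_k is the closed unit ball in ℝ^k and V_{1,k} = π^{k/2}/Γ(k/2+1) is its volume. Then lim_{k→∞} f_k(ν_R)/f_k(ν_P) = ∞, and consequently lim_{k→∞} f_k(ν_R)/( f_k(ν_R) + f_k(ν_P) ) = 1. -/

import Mathlib

open Real MeasureTheory Filter

/-- `f_k(ν) := (1/V_{1,k})·(2πν)^{−k/2}·∫_{B_k} exp(−‖x‖²/(2ν)) dx`, the density at `0` of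
`X + Z` for `X` uniform on the unit ball `B_k ⊆ ℝ^k` and `Z ~ N(0, ν I_k)` independent.
Here `V_{1,k} = π^{k/2}/Γ(k/2+1)` is the volume of the unit ball. -/
noncomputable def densAtZero (k : ℕ) (ν : ℝ) : ℝ :=
  (1 / (Real.pi ^ ((k : ℝ) / 2) / Real.Gamma ((k : ℝ) / 2 + 1))) *
    (2 * Real.pi * ν) ^ (-(k : ℝ) / 2) *
    ∫ x in Metric.closedBall (0 : EuclideanSpace ℝ (Fin k)) 1,
      Real.exp (-‖x‖ ^ 2 / (2 * ν))

/-!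
On the unit ball the Gaussian weight `exp (-‖x‖² / (2ν))` lies between `exp (-1 / (2ν))` and `1`,
so the ball integrals in `f_k(ν_R)` and `f_k(ν_P)` differ by a factor bounded below independently
of `k`. The normalising factors contribute exactly `(ν_P / ν_R) ^ (k / 2)`, which tends to infinity.
-/

section GaussianWeight

variable {E : Type*} [NormedAddCommGroup E] {ν : ℝ}

lemma exp_neg_sq_norm_div_le_one (hν : 0 ≤ ν) (x : E) : exp (-‖x‖ ^ 2 / (2 * ν)) ≤ 1 :=
  exp_le_one_iff.2 <| div_nonpos_of_nonpos_of_nonneg (neg_nonpos.2 (sq_nonneg _)) (by positivity)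

lemma exp_neg_inv_le_exp_neg_sq_norm_div (hν : 0 ≤ ν) {x : E} (hx : ‖x‖ ≤ 1) :
    exp (-1 / (2 * ν)) ≤ exp (-‖x‖ ^ 2 / (2 * ν)) := by
  gcongr
  exact pow_le_one₀ (norm_nonneg x) hx

variable [MeasurableSpace E] [OpensMeasurableSpace E] {μ : Measure E} {s : Set E}

lemma integrableOn_exp_neg_sq_norm_div (hμs : μ s ≠ ⊤) (hν : 0 ≤ ν) :
    IntegrableOn (fun x ↦ exp (-‖x‖ ^ 2 / (2 * ν))) s μ := by
  refine Measure.integrableOn_of_bounded hμs (by fun_prop) (M := 1) (ae_of_all _ fun x ↦ ?_)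
  rw [norm_of_nonneg (exp_pos _).le]
  exact exp_neg_sq_norm_div_le_one hν x

lemma setIntegral_exp_neg_sq_norm_div_le (hs : MeasurableSet s) (hμs : μ s ≠ ⊤) (hν : 0 ≤ ν) :
    ∫ x in s, exp (-‖x‖ ^ 2 / (2 * ν)) ∂μ ≤ μ.real s := by
  calc ∫ x in s, exp (-‖x‖ ^ 2 / (2 * ν)) ∂μ ≤ ∫ _ in s, (1 : ℝ) ∂μ :=
        setIntegral_mono_on (integrableOn_exp_neg_sq_norm_div hμs hν) (integrableOn_const hμs) hs
          fun x _ ↦ exp_neg_sq_norm_div_le_one hν x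
    _ = μ.real s := by simp

lemma exp_neg_inv_mul_le_setIntegral_exp_neg_sq_norm_div (hs : MeasurableSet s) (hμs : μ s ≠ ⊤)
    (hs_ball : s ⊆ Metric.closedBall 0 1) (hν : 0 ≤ ν) :
    exp (-1 / (2 * ν)) * μ.real s ≤ ∫ x in s, exp (-‖x‖ ^ 2 / (2 * ν)) ∂μ :=
  setIntegral_ge_of_const_le_real hs hμs
    (fun _ hx ↦ exp_neg_inv_le_exp_neg_sq_norm_div hν (mem_closedBall_zero_iff.1 (hs_ball hx)))
    (integrableOn_exp_neg_sq_norm_div hμs hν)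

lemma exp_neg_inv_le_setIntegral_div_setIntegral (hs : MeasurableSet s) (hμs : μ s ≠ ⊤)
    (hμs₀ : μ s ≠ 0) (hs_ball : s ⊆ Metric.closedBall 0 1) {a b : ℝ} (ha : 0 ≤ a) (hb : 0 ≤ b) :
    exp (-1 / (2 * a)) ≤
      (∫ x in s, exp (-‖x‖ ^ 2 / (2 * a)) ∂μ) / ∫ x in s, exp (-‖x‖ ^ 2 / (2 * b)) ∂μ := by
  have hs_pos : 0 < μ.real s := ENNReal.toReal_pos hμs₀ hμs
  have hb_pos : 0 < ∫ x in s, exp (-‖x‖ ^ 2 / (2 * b)) ∂μ :=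
    (mul_pos (exp_pos _) hs_pos).trans_le
      (exp_neg_inv_mul_le_setIntegral_exp_neg_sq_norm_div hs hμs hs_ball hb)
  rw [le_div_iff₀ hb_pos]
  calc exp (-1 / (2 * a)) * ∫ x in s, exp (-‖x‖ ^ 2 / (2 * b)) ∂μ
      ≤ exp (-1 / (2 * a)) * μ.real s := by
        gcongr
        exact setIntegral_exp_neg_sq_norm_div_le hs hμs hb
    _ ≤ ∫ x in s, exp (-‖x‖ ^ 2 / (2 * a)) ∂μ :=
        exp_neg_inv_mul_le_setIntegral_exp_neg_sq_norm_div hs hμs hs_ball ha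

end GaussianWeight

section UnitBall

variable (k : ℕ)

lemma measure_unitClosedBall_ne_top :
    volume (Metric.closedBall (0 : EuclideanSpace ℝ (Fin k)) 1) ≠ ⊤ :=
  measure_closedBall_lt_top.ne

lemma measure_unitClosedBall_ne_zero :
    volume (Metric.closedBall (0 : EuclideanSpace ℝ (Fin k)) 1) ≠ 0 :=
  (Metric.measure_closedBall_pos volume 0 one_pos).ne'

lemma exp_neg_inv_le_ballIntegral_div_ballIntegral {a b : ℝ} (ha : 0 ≤ a) (hb : 0 ≤ b) :
    exp (-1 / (2 * a)) ≤
      (∫ x in Metric.closedBall (0 : EuclideanSpace ℝ (Fin k)) 1, exp (-‖x‖ ^ 2 / (2 * a))) /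
        ∫ x in Metric.closedBall (0 : EuclideanSpace ℝ (Fin k)) 1, exp (-‖x‖ ^ 2 / (2 * b)) :=
  exp_neg_inv_le_setIntegral_div_setIntegral measurableSet_closedBall
    (measure_unitClosedBall_ne_top k) (measure_unitClosedBall_ne_zero k) subset_rfl ha hb

lemma densAtZero_pos {ν : ℝ} (hν : 0 < ν) : 0 < densAtZero k ν := by
  have hball : 0 < volume.real (Metric.closedBall (0 : EuclideanSpace ℝ (Fin k)) 1) :=
    ENNReal.toReal_pos (measure_unitClosedBall_ne_zero k) (measure_unitClosedBall_ne_top k)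
  have hint := exp_neg_inv_mul_le_setIntegral_exp_neg_sq_norm_div measurableSet_closedBall
    (measure_unitClosedBall_ne_top k) subset_rfl hν.le
  unfold densAtZero
  exact mul_pos (by positivity) ((mul_pos (exp_pos _) hball).trans_le hint)

lemma densAtZero_div_densAtZero {a b : ℝ} (ha : 0 < a) (hb : 0 < b) :
    densAtZero k a / densAtZero k b =
      (b / a) ^ ((k : ℝ) / 2) *
        ((∫ x in Metric.closedBall (0 : EuclideanSpace ℝ (Fin k)) 1, exp (-‖x‖ ^ 2 / (2 * a))) /
          ∫ x in Metric.closedBall (0 : EuclideanSpace ℝ (Fin k)) 1, exp (-‖x‖ ^ 2 / (2 * b))) := by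
  have hscale : (2 * π * a) ^ (-(k : ℝ) / 2) / (2 * π * b) ^ (-(k : ℝ) / 2) =
      (b / a) ^ ((k : ℝ) / 2) := by
    rw [neg_div, rpow_neg (by positivity), rpow_neg (by positivity), inv_div_inv,
      ← div_rpow (by positivity) (by positivity)]
    congr 1
    field_simp
  have hV : 1 / (π ^ ((k : ℝ) / 2) / Gamma ((k : ℝ) / 2 + 1)) ≠ 0 := by positivity
  unfold densAtZero
  rw [mul_div_mul_comm, mul_div_mul_left _ _ hV, hscale]

lemma exp_neg_inv_mul_rpow_le_densAtZero_div {a b : ℝ} (ha : 0 < a) (hb : 0 < b) :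
    exp (-1 / (2 * a)) * (b / a) ^ ((k : ℝ) / 2) ≤ densAtZero k a / densAtZero k b := by
  rw [densAtZero_div_densAtZero k ha hb, mul_comm]
  gcongr
  exact exp_neg_inv_le_ballIntegral_div_ballIntegral k ha.le hb.le

end UnitBall

lemma tendsto_div_add_nhds_one_of_tendsto_div_atTop {α : Type*} {l : Filter α} {f g : α → ℝ}
    (hg : ∀ᶠ x in l, g x ≠ 0) (h : Tendsto (fun x ↦ f x / g x) l atTop) :
    Tendsto (fun x ↦ f x / (f x + g x)) l (nhds 1) := by
  have hlim : Tendsto (fun x ↦ 1 - (f x / g x + 1)⁻¹) l (nhds (1 - 0)) :=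
    tendsto_const_nhds.sub (tendsto_inv_atTop_zero.comp (tendsto_atTop_add_const_right _ 1 h))
  rw [sub_zero] at hlim
  refine hlim.congr' ?_
  filter_upwards [hg, h.eventually_gt_atTop 0] with x hgx hpos
  have hsum : f x / g x + 1 ≠ 0 := by positivity
  calc 1 - (f x / g x + 1)⁻¹ = f x / g x / (f x / g x + 1) := by
        rw [eq_div_iff hsum, sub_mul, inv_mul_cancel₀ hsum]; ring
    _ = f x / (f x + g x) := by rw [div_add_one hgx, div_div_div_cancel_right₀ hgx]

/-- Many dimensions: for fixed `0 < ν_R < ν_P`, `f_k(ν_R)/f_k(ν_P) → ∞` and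
`f_k(ν_R)/(f_k(ν_R) + f_k(ν_P)) → 1` as `k → ∞`. -/
theorem densAtZero_ratio_tendsto_atTop (νR νP : ℝ) (hR : 0 < νR) (hRP : νR < νP) :
    Tendsto (fun k : ℕ => densAtZero k νR / densAtZero k νP) atTop atTop ∧
    Tendsto (fun k : ℕ => densAtZero k νR / (densAtZero k νR + densAtZero k νP))
      atTop (nhds 1) := by
  have hP : 0 < νP := hR.trans hRP
  have hgrowth : Tendsto (fun k : ℕ ↦ (νP / νR) ^ ((k : ℝ) / 2)) atTop atTop :=
    (tendsto_rpow_atTop_of_base_gt_one _ ((one_lt_div hR).2 hRP)).comp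
      (tendsto_natCast_atTop_atTop.atTop_div_const two_pos)
  have hratio : Tendsto (fun k : ℕ ↦ densAtZero k νR / densAtZero k νP) atTop atTop :=
    tendsto_atTop_mono (fun k ↦ exp_neg_inv_mul_rpow_le_densAtZero_div k hR hP)
      (hgrowth.const_mul_atTop (exp_pos _))
  exact ⟨hratio, tendsto_div_add_nhds_one_of_tendsto_div_atTop
    (Eventually.of_forall fun k ↦ (densAtZero_pos k hP).ne') hratio⟩
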